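/- arXiv:2007.00331 — 4 statements merged into one kernel-verified Lean document; each statement's English description precedes it below -/
import Mathlib

section
/- Let Ω ⊆ ℝ² be open and connected, and let e : Ω → ℝ² be a C² vector field with |e(x)| = 1 for all x ∈ Ω, satisfying ∂₁e₂ - ∂₂e₁ = α₁ and ∂₁e₁ + ∂₂e₂ = α₂ on Ω for constants α₁, α₂ ∈ ℝ. Then e is constant on Ω. -/
/-- Partial derivative in the `i`-th coordinate direction. -/
noncomputable def pd {n : ℕ} (i : Fin n) (f : (Fin n → ℝ) → ℝ) (x : Fin n → ℝ) : ℝ :=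
  fderiv ℝ f x (Pi.single i 1)

/-!
Write `e = (f, g)` and `κᵢ = f ∂ᵢg - g ∂ᵢf`. Since `f² + g² = 1`, `∂ᵢe = κᵢ (-g, f)`, and the curl
and divergence equations become the linear system `κ₀ = α₁ f - α₂ g`, `κ₁ = α₁ g + α₂ f`.
Differentiating it, `∂₁κ₀ = -κ₁²` and `∂₀κ₁ = κ₀²`; but `∂₁κ₀ = ∂₀κ₁` by symmetry of second
derivatives, so `κ = 0`, and `κ₀² + κ₁² = α₁² + α₂²` forces `α₁ = α₂ = 0`. Then `De = 0` on `Ω`,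
and `e` is constant on the connected open set `Ω`.
-/

section

variable {n : ℕ} {i j : Fin n} {f g : (Fin n → ℝ) → ℝ} {x : Fin n → ℝ}

lemma pd_add (hf : DifferentiableAt ℝ f x) (hg : DifferentiableAt ℝ g x) :
    pd i (fun y => f y + g y) x = pd i f x + pd i g x := by
  rw [pd, fderiv_fun_add hf hg]; rfl

lemma pd_sub (hf : DifferentiableAt ℝ f x) (hg : DifferentiableAt ℝ g x) :
    pd i (fun y => f y - g y) x = pd i f x - pd i g x := by
  rw [pd, fderiv_fun_sub hf hg]; rfl

lemma pd_mul (hf : DifferentiableAt ℝ f x) (hg : DifferentiableAt ℝ g x) :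
    pd i (fun y => f y * g y) x = f x * pd i g x + g x * pd i f x := by
  rw [pd, fderiv_fun_mul hf hg]; rfl

lemma pd_const_mul (hf : DifferentiableAt ℝ f x) (c : ℝ) :
    pd i (fun y => c * f y) x = c * pd i f x := by
  rw [pd, fderiv_const_mul hf]; rfl

lemma pd_const (c : ℝ) : pd i (fun _ => c) x = 0 := by
  simp [pd]

lemma Filter.EventuallyEq.pd_eq (h : f =ᶠ[nhds x] g) : pd i f x = pd i g x := by
  rw [pd, h.fderiv_eq, pd]

lemma ContDiffAt.differentiableAt_pd (hf : ContDiffAt ℝ 2 f x) :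
    DifferentiableAt ℝ (pd i f) x :=
  ((hf.fderiv_right (m := 1) (by norm_num)).differentiableAt (by norm_num)).clm_apply
    (differentiableAt_const _)

lemma pd_pd_comm (hf : ContDiffAt ℝ 2 f x) : pd i (pd j f) x = pd j (pd i f) x := by
  have hf' : DifferentiableAt ℝ (fderiv ℝ f) x :=
    (hf.fderiv_right (m := 1) (by norm_num)).differentiableAt (by norm_num)
  have hpd : ∀ k l, pd k (pd l f) x = fderiv ℝ (fderiv ℝ f) x (Pi.single k 1) (Pi.single l 1) := by
    intro k l
    rw [pd, show pd l f = fun y => fderiv ℝ f y (Pi.single l 1) from rfl,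
      fderiv_clm_apply hf' (differentiableAt_const _)]
    simp
  rw [hpd, hpd]
  exact hf.isSymmSndFDerivAt (by simp) _ _

lemma fderiv_eq_zero_of_forall_pd_eq_zero (h : ∀ i, pd i f x = 0) : fderiv ℝ f x = 0 := by
  apply ContinuousLinearMap.coe_injective
  refine LinearMap.pi_ext fun i t => ?_
  have hi := h i
  rw [pd] at hi
  rw [← mul_one t, ← smul_eq_mul, Pi.single_smul']
  simp [hi]

lemma eq_of_forall_pd_eq_zero {Ω : Set (Fin n → ℝ)} (hΩ : IsOpen Ω) (hconn : IsPreconnected Ω)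
    (hf : DifferentiableOn ℝ f Ω) (h : ∀ y ∈ Ω, ∀ i, pd i f y = 0) {y z : Fin n → ℝ}
    (hy : y ∈ Ω) (hz : z ∈ Ω) : f y = f z :=
  hΩ.is_const_of_fderiv_eq_zero hconn hf
    (fun w hw => fderiv_eq_zero_of_forall_pd_eq_zero (h w hw)) hy hz

/-- For `(f, g) = (cos θ, sin θ)` this is `pd i θ`. -/
noncomputable def pdAngle (i : Fin n) (f g : (Fin n → ℝ) → ℝ) (x : Fin n → ℝ) : ℝ :=
  f x * pd i g x - g x * pd i f x

lemma pd_eq_pdAngle (hf : DifferentiableAt ℝ f x) (hg : DifferentiableAt ℝ g x)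
    (hunit : ∀ᶠ y in nhds x, f y ^ 2 + g y ^ 2 = 1) :
    pd i f x = -(g x * pdAngle i f g x) ∧ pd i g x = f x * pdAngle i f g x := by
  have horth : f x * pd i f x + g x * pd i g x = 0 := by
    have hsq : (fun y => f y * f y + g y * g y) =ᶠ[nhds x] fun _ => 1 :=
      hunit.mono fun y hy => by linear_combination hy
    have h := hsq.pd_eq (i := i)
    rw [pd_add (hf.fun_mul hf) (hg.fun_mul hg), pd_mul hf hf, pd_mul hg hg, pd_const] at h
    linarith
  have hx := hunit.self_of_nhds
  rw [pdAngle]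
  constructor
  · linear_combination f x * horth - pd i f x * hx
  · linear_combination g x * horth - pd i g x * hx

-- The right side is twice the Jacobian of `(f, g)`; it vanishes when `(f, g)` is circle-valued.
lemma pd_pdAngle_sub_pd_pdAngle (hf : ContDiffAt ℝ 2 f x) (hg : ContDiffAt ℝ 2 g x) :
    pd j (pdAngle i f g) x - pd i (pdAngle j f g) x
      = 2 * (pd i g x * pd j f x - pd i f x * pd j g x) := by
  have hf₁ := hf.differentiableAt (by norm_num)
  have hg₁ := hg.differentiableAt (by norm_num)
  have hexpand : ∀ k l, pd l (pdAngle k f g) x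
      = f x * pd l (pd k g) x + pd k g x * pd l f x
        - (g x * pd l (pd k f) x + pd k f x * pd l g x) := by
    intro k l
    unfold pdAngle
    rw [pd_sub (hf₁.fun_mul hg.differentiableAt_pd) (hg₁.fun_mul hf.differentiableAt_pd),
      pd_mul hf₁ hg.differentiableAt_pd, pd_mul hg₁ hf.differentiableAt_pd]
  rw [hexpand, hexpand, pd_pd_comm hf (i := i), pd_pd_comm hg (i := i)]
  ring

end

section

variable {f g : (Fin 2 → ℝ) → ℝ} {x : Fin 2 → ℝ} {α₁ α₂ : ℝ}

lemma pdAngle_eq_of_curl_div (hf : DifferentiableAt ℝ f x) (hg : DifferentiableAt ℝ g x)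
    (hunit : ∀ᶠ y in nhds x, f y ^ 2 + g y ^ 2 = 1)
    (hcurl : pd 0 g x - pd 1 f x = α₁) (hdiv : pd 0 f x + pd 1 g x = α₂) :
    pdAngle 0 f g x = α₁ * f x - α₂ * g x ∧ pdAngle 1 f g x = α₁ * g x + α₂ * f x := by
  obtain ⟨hf₀, hg₀⟩ := pd_eq_pdAngle (i := 0) hf hg hunit
  obtain ⟨hf₁, hg₁⟩ := pd_eq_pdAngle (i := 1) hf hg hunit
  simp only [hf₀, hg₀, hf₁, hg₁] at hcurl hdiv
  have hx := hunit.self_of_nhds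
  constructor
  · linear_combination f x * hcurl - g x * hdiv - pdAngle 0 f g x * hx
  · linear_combination g x * hcurl + f x * hdiv - pdAngle 1 f g x * hx

lemma pd_eq_zero_of_curl_div_eq_zero (hf : DifferentiableAt ℝ f x)
    (hg : DifferentiableAt ℝ g x) (hunit : ∀ᶠ y in nhds x, f y ^ 2 + g y ^ 2 = 1)
    (hcurl : pd 0 g x - pd 1 f x = 0) (hdiv : pd 0 f x + pd 1 g x = 0) (i : Fin 2) :
    pd i f x = 0 ∧ pd i g x = 0 := by
  obtain ⟨hκ₀, hκ₁⟩ := pdAngle_eq_of_curl_div hf hg hunit hcurl hdiv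
  obtain ⟨hfi, hgi⟩ := pd_eq_pdAngle (i := i) hf hg hunit
  have hκ : pdAngle i f g x = 0 := by
    fin_cases i <;> simp [hκ₀, hκ₁]
  rw [hfi, hgi, hκ]
  simp

lemma curl_div_const_eq_zero_of_unit (hf : ContDiffAt ℝ 2 f x) (hg : ContDiffAt ℝ 2 g x)
    (hunit : ∀ᶠ y in nhds x, f y ^ 2 + g y ^ 2 = 1)
    (hcurl : ∀ᶠ y in nhds x, pd 0 g y - pd 1 f y = α₁)
    (hdiv : ∀ᶠ y in nhds x, pd 0 f y + pd 1 g y = α₂) :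
    α₁ = 0 ∧ α₂ = 0 := by
  have hκ : ∀ᶠ y in nhds x, pdAngle 0 f g y = α₁ * f y - α₂ * g y
      ∧ pdAngle 1 f g y = α₁ * g y + α₂ * f y := by
    filter_upwards [hf.eventually (by simp), hg.eventually (by simp), hunit.eventually_nhds,
      hcurl, hdiv] with y hfy hgy hunity hcurly hdivy
    exact pdAngle_eq_of_curl_div (hfy.differentiableAt (by norm_num))
      (hgy.differentiableAt (by norm_num)) hunity hcurly hdivy
  have hf₁ := hf.differentiableAt (by norm_num)
  have hg₁ := hg.differentiableAt (by norm_num)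
  have h₁₀ : pd 1 (pdAngle 0 f g) x = α₁ * pd 1 f x - α₂ * pd 1 g x := by
    rw [Filter.EventuallyEq.pd_eq (hκ.mono fun y hy => hy.1),
      pd_sub (hf₁.const_mul α₁) (hg₁.const_mul α₂), pd_const_mul hf₁, pd_const_mul hg₁]
  have h₀₁ : pd 0 (pdAngle 1 f g) x = α₁ * pd 0 g x + α₂ * pd 0 f x := by
    rw [Filter.EventuallyEq.pd_eq (hκ.mono fun y hy => hy.2),
      pd_add (hg₁.const_mul α₁) (hf₁.const_mul α₂), pd_const_mul hf₁, pd_const_mul hg₁]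
  have hcompat := pd_pdAngle_sub_pd_pdAngle (i := 0) (j := 1) hf hg
  obtain ⟨hf₀', hg₀'⟩ := pd_eq_pdAngle (i := 0) hf₁ hg₁ hunit
  obtain ⟨hf₁', hg₁'⟩ := pd_eq_pdAngle (i := 1) hf₁ hg₁ hunit
  obtain ⟨hκ₀, hκ₁⟩ := hκ.self_of_nhds
  rw [h₁₀, h₀₁, hf₀', hg₀', hf₁', hg₁', hκ₀, hκ₁] at hcompat
  have hsq : α₁ ^ 2 + α₂ ^ 2 = 0 := by
    linear_combination -hcompat - (α₁ ^ 2 + α₂ ^ 2) * hunit.self_of_nhds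
  obtain ⟨h₁, h₂⟩ := (add_eq_zero_iff_of_nonneg (sq_nonneg α₁) (sq_nonneg α₂)).1 hsq
  exact ⟨pow_eq_zero_iff two_ne_zero |>.1 h₁, pow_eq_zero_iff two_ne_zero |>.1 h₂⟩

end

theorem rotation_field_constant_2d
    (Ω : Set (Fin 2 → ℝ)) (hΩ : IsOpen Ω) (hconn : IsConnected Ω)
    (e : (Fin 2 → ℝ) → Fin 2 → ℝ) (he : ContDiffOn ℝ 2 e Ω)
    (hunit : ∀ x ∈ Ω, (e x 0) ^ 2 + (e x 1) ^ 2 = 1)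
    (α₁ α₂ : ℝ)
    (h1 : ∀ x ∈ Ω, pd 0 (fun y => e y 1) x - pd 1 (fun y => e y 0) x = α₁)
    (h2 : ∀ x ∈ Ω, pd 0 (fun y => e y 0) x + pd 1 (fun y => e y 1) x = α₂) :
    ∀ x ∈ Ω, ∀ y ∈ Ω, e x = e y := by
  have hcomp (j : Fin 2) : ContDiffOn ℝ 2 (fun y => e y j) Ω :=
    (contDiff_apply ℝ ℝ j).comp_contDiffOn he
  have hcompAt (j : Fin 2) {z} (hz : z ∈ Ω) : ContDiffAt ℝ 2 (fun y => e y j) z :=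
    (hcomp j).contDiffAt (hΩ.mem_nhds hz)
  have hunit' {z} (hz : z ∈ Ω) : ∀ᶠ y in nhds z, e y 0 ^ 2 + e y 1 ^ 2 = 1 :=
    Filter.eventually_of_mem (hΩ.mem_nhds hz) hunit
  intro x hx y hy
  obtain ⟨rfl, rfl⟩ := curl_div_const_eq_zero_of_unit (hcompAt 0 hx) (hcompAt 1 hx) (hunit' hx)
    (Filter.eventually_of_mem (hΩ.mem_nhds hx) h1) (Filter.eventually_of_mem (hΩ.mem_nhds hx) h2)
  have hpd {z} (hz : z ∈ Ω) (i : Fin 2) :=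
    pd_eq_zero_of_curl_div_eq_zero ((hcompAt 0 hz).differentiableAt (by norm_num))
      ((hcompAt 1 hz).differentiableAt (by norm_num)) (hunit' hz) (h1 z hz) (h2 z hz) i
  have hconst (j : Fin 2) (hj : ∀ z ∈ Ω, ∀ i, pd i (fun y => e y j) z = 0) : e x j = e y j :=
    eq_of_forall_pd_eq_zero hΩ hconn.isPreconnected ((hcomp j).differentiableOn (by norm_num))
      hj hx hy
  funext j
  fin_cases j
  exacts [hconst 0 fun z hz i => (hpd hz i).1, hconst 1 fun z hz i => (hpd hz i).2]
end

section
/- Let R : ℝ³ → SO(3) be a C¹ matrix field with curl R = α for a constant matrix α ∈ ℝ³ˣ³ (curl taken rowwise). Then α = 0 and R is constant. -/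
/-!
Each entry of a rotation has absolute value at most `1`, and row `i` of `R` satisfies
`∂_{l+1} R_{i,l+2} - ∂_{l+2} R_{i,l+1} = α_{il}`. Integrating this over a `T × T` square in the
`(x_{l+1}, x_{l+2})`-plane, the divergence theorem turns `α_{il} T²` into four boundary integrals
of size at most `T` each, so `α = 0`.

With zero curl, `∂_j R_{ik}` is symmetric in `j, k`, while differentiating `RᵀR = 1` shows that
`A_j = Rᵀ ∂_j R` is skew. The tensor `(A_j)_{mk}` is then symmetric in `(j, k)` and skew in
`(m, k)`, which forces it to vanish. Hence `∂_j R = R A_j = 0` and `R` is constant.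
-/

open Matrix

/-- The Levi-Civita symbol in dimension 3. -/
def eps (i j k : Fin 3) : ℝ :=
  if (i, j, k) = (0, 1, 2) ∨ (i, j, k) = (1, 2, 0) ∨ (i, j, k) = (2, 0, 1) then 1
  else if (i, j, k) = (2, 1, 0) ∨ (i, j, k) = (0, 2, 1) ∨ (i, j, k) = (1, 0, 2) then -1
  else 0

open Set MeasureTheory
open scoped Interval

theorem sum_eps_mul (v : Fin 3 → Fin 3 → ℝ) (l : Fin 3) :
    ∑ j, ∑ k, eps l j k * v j k = v (l + 1) (l + 2) - v (l + 2) (l + 1) := by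
  fin_cases l <;> simp [Fin.sum_univ_three, eps] <;> ring

theorem symm_of_forall_sum_eps_mul_eq_zero {v : Fin 3 → Fin 3 → ℝ}
    (h : ∀ l, ∑ j, ∑ k, eps l j k * v j k = 0) (j k : Fin 3) : v j k = v k j := by
  simp only [sum_eps_mul, sub_eq_zero] at h
  have h0 := h 0
  have h1 := h 1
  have h2 := h 2
  fin_cases j <;> fin_cases k <;> simp_all

theorem eq_zero_of_skew_of_symm {ι M : Type*} [AddGroup M] [IsAddTorsionFree M]
    (a : ι → ι → ι → M) (hskew : ∀ j m k, a j m k = -a j k m)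
    (hsymm : ∀ j m k, a j m k = a k m j) (j m k : ι) : a j m k = 0 :=
  self_eq_neg.mp <|
    calc a j m k = a k m j := hsymm j m k
      _ = -a k j m := hskew k m j
      _ = -a m j k := by rw [hsymm k j m]
      _ = a m k j := by rw [hskew m j k, neg_neg]
      _ = a j k m := hsymm m k j
      _ = -a j m k := hskew j k m

section OrthogonalMatrix

variable {ι : Type*} [Fintype ι] [DecidableEq ι]

theorem eq_zero_of_transpose_mul_skew_of_symm {K : Type*} [CommRing K] [IsAddTorsionFree K]
    {Q : Matrix ι ι K} (hQ : Qᵀ * Q = 1) {D : ι → Matrix ι ι K}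
    (hskew : ∀ j, Qᵀ * D j + (D j)ᵀ * Q = 0) (hsymm : ∀ i j k, D j i k = D k i j) (j : ι) :
    D j = 0 := by
  have hA : ∀ j, Qᵀ * D j = 0 := by
    intro j
    ext m k
    refine eq_zero_of_skew_of_symm (fun j m k => (Qᵀ * D j) m k) (fun j m k => ?_)
      (fun j m k => ?_) j m k
    · have hDQ : (D j)ᵀ * Q = (Qᵀ * D j)ᵀ := by rw [transpose_mul, transpose_transpose]
      have hmk := congrFun₂ (hskew j) m k
      rw [hDQ] at hmk
      exact eq_neg_of_add_eq_zero_left hmk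
    · simp only [mul_apply, transpose_apply, hsymm _ j k]
  calc D j = Q * (Qᵀ * D j) := by rw [← Matrix.mul_assoc, mul_eq_one_comm.mp hQ, Matrix.one_mul]
    _ = 0 := by rw [hA, Matrix.mul_zero]

theorem abs_apply_le_one_of_transpose_mul_self_eq_one {Q : Matrix ι ι ℝ} (hQ : Qᵀ * Q = 1)
    (i k : ι) : |Q i k| ≤ 1 := by
  have hU : Q ∈ unitaryGroup ι ℝ := by
    rwa [mem_unitaryGroup_iff', star_eq_conjTranspose, conjTranspose_eq_transpose_of_trivial]
  simpa using entry_norm_bound_of_unitary hU i k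

end OrthogonalMatrix

theorem eq_zero_of_forall_abs_mul_le {c K : ℝ} (h : ∀ T > 0, |c| * T ≤ K) : c = 0 := by
  by_contra hc
  have hc' : 0 < |c| := abs_pos.mpr hc
  have hT := h ((|K| + 1) / |c|) (by positivity)
  rw [mul_div_cancel₀ _ hc'.ne'] at hT
  linarith [le_abs_self K]

section Calculus

variable {E : Type*} [NormedAddCommGroup E] [NormedSpace ℝ E]

theorem HasFDerivAt.apply_apply {ι κ : Type*} [Fintype ι] [Fintype κ] {R : E → ι → κ → ℝ}
    {R' : E →L[ℝ] ι → κ → ℝ} {x : E} (hR : HasFDerivAt R R' x) (i : ι) (k : κ) :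
    HasFDerivAt (fun y => R y i k)
      ((ContinuousLinearMap.proj k).comp ((ContinuousLinearMap.proj i).comp R')) x :=
  hasFDerivAt_pi'.1 (hasFDerivAt_pi'.1 hR i) k

theorem fderiv_apply_apply {ι κ : Type*} [Fintype ι] [Fintype κ] {R : E → ι → κ → ℝ} {x : E}
    (hR : DifferentiableAt ℝ R x) (i : ι) (k : κ) (v : E) :
    fderiv ℝ (fun y => R y i k) x v = fderiv ℝ R x v i k := by
  rw [(hR.hasFDerivAt.apply_apply i k).fderiv]
  rfl

theorem transpose_mul_fderiv_add_eq_zero {ι : Type*} [Fintype ι] [DecidableEq ι]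
    {R : E → ι → ι → ℝ} (hR : Differentiable ℝ R) (hO : ∀ y, (of (R y))ᵀ * of (R y) = 1)
    (x v : E) : (of (R x))ᵀ * of (fderiv ℝ R x v) + (of (fderiv ℝ R x v))ᵀ * of (R x) = 0 := by
  ext k m
  have hsum := HasFDerivAt.fun_sum (u := Finset.univ) fun i _ =>
    ((hR x).hasFDerivAt.apply_apply i k).fun_mul ((hR x).hasFDerivAt.apply_apply i m)
  have hconst : (fun y => ∑ i, R y i k * R y i m) = fun _ => (1 : Matrix ι ι ℝ) k m :=
    funext fun y => by simpa [mul_apply] using congrFun₂ (hO y) k m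
  rw [hconst] at hsum
  simpa [mul_apply, Finset.sum_add_distrib, mul_comm] using
    (congrArg (· v) ((hasFDerivAt_const _ x).unique hsum)).symm

theorem eq_zero_of_bounded_of_divergence_eq_const {F G : ℝ × ℝ → ℝ}
    (hF : Differentiable ℝ F) (hG : Differentiable ℝ G) {M c : ℝ}
    (hFM : ∀ p, |F p| ≤ M) (hGM : ∀ p, |G p| ≤ M)
    (hdiv : ∀ p, fderiv ℝ F p (1, 0) + fderiv ℝ G p (0, 1) = c) : c = 0 := by
  refine eq_zero_of_forall_abs_mul_le (K := 4 * M) fun T hT => ?_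
  have hint : IntegrableOn (fun p => fderiv ℝ F p (1, 0) + fderiv ℝ G p (0, 1))
      ([[0, T]] ×ˢ [[0, T]]) := by
    simp only [hdiv]
    exact continuousOn_const.integrableOn_compact (isCompact_uIcc.prod isCompact_uIcc)
  have hgreen := integral2_divergence_prod_of_hasFDerivAt_off_countable F G (fderiv ℝ F)
    (fderiv ℝ G) 0 0 T T ∅ countable_empty hF.continuous.continuousOn hG.continuous.continuousOn
    (fun p _ => (hF p).hasFDerivAt) (fun p _ => (hG p).hasFDerivAt) hint
  simp only [hdiv, intervalIntegral.integral_const, sub_zero, smul_eq_mul] at hgreen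
  have hside : ∀ φ : ℝ → ℝ, (∀ s, |φ s| ≤ M) → |∫ s in (0)..T, φ s| ≤ M * T := fun φ hφ => by
    simpa [abs_of_pos hT] using
      intervalIntegral.norm_integral_le_of_norm_le_const (a := 0) (b := T) (f := φ) fun s _ => hφ s
  have hF0 := abs_le.mp (hside _ fun s => hFM (0, s))
  have hFT := abs_le.mp (hside _ fun s => hFM (T, s))
  have hG0 := abs_le.mp (hside _ fun s => hGM (s, 0))
  have hGT := abs_le.mp (hside _ fun s => hGM (s, T))
  have hsquare : |c| * T * T ≤ 4 * M * T := by
    calc |c| * T * T = |T * (T * c)| := by rw [abs_mul, abs_mul, abs_of_pos hT]; ring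
      _ ≤ 4 * M * T := by rw [hgreen]; exact abs_le.mpr ⟨by linarith, by linarith⟩
  exact le_of_mul_le_mul_right hsquare hT

theorem eq_zero_of_bounded_of_fderiv_sub_eq_const {f g : E → ℝ} (hf : Differentiable ℝ f)
    (hg : Differentiable ℝ g) {M : ℝ} (hfM : ∀ x, |f x| ≤ M) (hgM : ∀ x, |g x| ≤ M) (u v : E)
    {c : ℝ} (h : ∀ x, fderiv ℝ f x u - fderiv ℝ g x v = c) : c = 0 := by
  let L : ℝ × ℝ →L[ℝ] E := (ContinuousLinearMap.fst ℝ ℝ ℝ).smulRight u +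
    (ContinuousLinearMap.snd ℝ ℝ ℝ).smulRight v
  refine eq_zero_of_bounded_of_divergence_eq_const (hf.comp L.differentiable)
    (hg.comp L.differentiable).neg (fun p => hfM (L p)) (fun p => by simpa using hgM (L p))
    fun p => ?_
  rw [((hf (L p)).hasFDerivAt.comp p L.hasFDerivAt).fderiv,
    ((hg (L p)).hasFDerivAt.comp p L.hasFDerivAt).neg.fderiv]
  simpa [L, sub_eq_add_neg] using h (L p)

end Calculus

theorem rotation_field_constant_curl_R3
    (R : (Fin 3 → ℝ) → Fin 3 → Fin 3 → ℝ) (hR : ContDiff ℝ 1 R)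
    (hSO : ∀ x, (Matrix.of (R x))ᵀ * Matrix.of (R x) = 1 ∧ (Matrix.of (R x)).det = 1)
    (α : Matrix (Fin 3) (Fin 3) ℝ)
    (hcurl : ∀ x, ∀ i l : Fin 3,
      ∑ j, ∑ k, eps l j k * pd j (fun y => R y i k) x = α i l) :
    α = 0 ∧ ∀ x y, R x = R y := by
  have hdiff : Differentiable ℝ R := hR.differentiable one_ne_zero
  have hentry : ∀ i k, Differentiable ℝ fun y => R y i k := fun i k x =>
    ((hdiff x).hasFDerivAt.apply_apply i k).differentiableAt
  have hbound : ∀ i k y, |R y i k| ≤ 1 := fun i k y =>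
    abs_apply_le_one_of_transpose_mul_self_eq_one (hSO y).1 i k
  have hα : α = 0 := by
    ext i l
    refine eq_zero_of_bounded_of_fderiv_sub_eq_const (hentry i (l + 2)) (hentry i (l + 1))
      (hbound i _) (hbound i _) (Pi.single (l + 1) 1) (Pi.single (l + 2) 1) fun x => ?_
    rw [← hcurl x i l, sum_eps_mul]
    rfl
  refine ⟨hα, fun x y => ?_⟩
  let D : (Fin 3 → ℝ) → Fin 3 → Matrix (Fin 3) (Fin 3) ℝ := fun x j =>
    of (fderiv ℝ R x (Pi.single j 1))
  have hsymm : ∀ x i j k, D x j i k = D x k i j := fun x i j k => by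
    simp only [D, of_apply, ← fderiv_apply_apply (hdiff x)]
    exact symm_of_forall_sum_eps_mul_eq_zero (fun l => by simpa [hα] using hcurl x i l) j k
  have hD : ∀ x j, D x j = 0 := fun x =>
    eq_zero_of_transpose_mul_skew_of_symm (hSO x).1
      (fun j => transpose_mul_fderiv_add_eq_zero hdiff (fun y => (hSO y).1) x _) (hsymm x)
  have hfderiv : ∀ x, fderiv ℝ R x = 0 := fun x => ContinuousLinearMap.coe_injective
    ((Pi.basisFun ℝ (Fin 3)).ext fun j => by rw [Pi.basisFun_apply]; exact hD x j)
  exact is_const_of_fderiv_eq_zero hdiff hfderiv x y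
end

section
/- Let α ∈ ℝ³ˣ³ be a matrix, v ∈ ℝ³ a unit vector with αv ≠ 0, and suppose R : Ω → SO(3) is C¹ with curl R = α on Ω, where Ω contains a closed disk of radius ρ with unit normal v and ρ > 2/‖αv‖. Then a contradiction follows; equivalently, for any C¹ field R : Ω → SO(3) with curl R = α constant, every disk D ⊆ Ω of radius ρ with unit normal v satisfies πρ²‖αv‖ ≤ 2πρ. -/
open Matrix

/-!
Put `a = α v` and pick `w` with `|w| ≤ 1` and `w ⬝ a = |a|`. Since `R` is rotation-valued, the
vector field `Rᵀ w` has length at most one, and since curl is taken rowwise its curl is the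
constant `αᵀ w`, whose flux through a unit-normal-`v` disk of radius `ρ` is `π ρ² (w ⬝ α v) =
π ρ² |α v|`. By Stokes' theorem, here Green's theorem on the polar rectangle `[0, ρ] × [0, 2π]`,
this equals the circulation of `Rᵀ w` around the boundary circle, which is at most `2 π ρ`.
-/

open Real Set MeasureTheory
open scoped Interval

noncomputable section PolarStokes

variable {E : Type*} [NormedAddCommGroup E] [NormedSpace ℝ E]

def planeCircle (e₁ e₂ : E) (θ : ℝ) : E := cos θ • e₁ + sin θ • e₂

def polarMap (c e₁ e₂ : E) (p : ℝ × ℝ) : E := c + p.1 • planeCircle e₁ e₂ p.2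

theorem hasDerivAt_planeCircle (e₁ e₂ : E) (θ : ℝ) :
    HasDerivAt (planeCircle e₁ e₂) (planeCircle e₂ (-e₁) θ) θ := by
  refine (((hasDerivAt_cos θ).smul_const e₁).add ((hasDerivAt_sin θ).smul_const e₂)).congr_deriv ?_
  simp only [planeCircle, smul_neg, neg_smul]
  abel

theorem differentiable_polarMap (c e₁ e₂ : E) : Differentiable ℝ (polarMap c e₁ e₂) := by
  unfold polarMap planeCircle
  fun_prop

theorem hasDerivAt_polarMap_fst (c e₁ e₂ : E) (r θ : ℝ) :
    HasDerivAt (fun t => polarMap c e₁ e₂ (t, θ)) (planeCircle e₁ e₂ θ) r := by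
  show HasDerivAt (fun t : ℝ => c + t • planeCircle e₁ e₂ θ) _ r
  simpa using ((hasDerivAt_id r).smul_const (planeCircle e₁ e₂ θ)).const_add c

theorem hasDerivAt_polarMap_snd (c e₁ e₂ : E) (r θ : ℝ) :
    HasDerivAt (fun t => polarMap c e₁ e₂ (r, t)) (r • planeCircle e₂ (-e₁) θ) θ :=
  ((hasDerivAt_planeCircle e₁ e₂ θ).const_smul r).const_add c

theorem apply_planeCircle_sub_apply_planeCircle (B : E →L[ℝ] E →L[ℝ] ℝ) (e₁ e₂ : E) (θ : ℝ) :
    B (planeCircle e₁ e₂ θ) (planeCircle e₂ (-e₁) θ)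
        - B (planeCircle e₂ (-e₁) θ) (planeCircle e₁ e₂ θ) = B e₁ e₂ - B e₂ e₁ := by
  simp only [planeCircle, map_add, map_smul, map_neg, _root_.add_apply, _root_.smul_apply,
    _root_.neg_apply, smul_eq_mul]
  linear_combination (B e₁ e₂ - B e₂ e₁) * sin_sq_add_cos_sq θ

theorem fderiv_apply_one_zero_eq {F : Type*} [NormedAddCommGroup F] [NormedSpace ℝ F]
    {f : ℝ × ℝ → F} {r θ : ℝ} {f' : F} (hf : DifferentiableAt ℝ f (r, θ))
    (h : HasDerivAt (fun t => f (t, θ)) f' r) : fderiv ℝ f (r, θ) (1, 0) = f' :=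
  (hf.hasFDerivAt.comp_hasDerivAt r ((hasDerivAt_id r).prodMk (hasDerivAt_const r θ))).unique h

theorem fderiv_apply_zero_one_eq {F : Type*} [NormedAddCommGroup F] [NormedSpace ℝ F]
    {f : ℝ × ℝ → F} {r θ : ℝ} {f' : F} (hf : DifferentiableAt ℝ f (r, θ))
    (h : HasDerivAt (fun t => f (r, t)) f' θ) : fderiv ℝ f (r, θ) (0, 1) = f' :=
  (hf.hasFDerivAt.comp_hasDerivAt θ ((hasDerivAt_const θ r).prodMk (hasDerivAt_id θ))).unique h

variable (ω : E → E →L[ℝ] ℝ) (c e₁ e₂ : E)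

/-- The pullback of `ω` along `polarMap` is `polarPullbackRadial dr + polarPullbackAngular dθ`. -/
def polarPullbackAngular (p : ℝ × ℝ) : ℝ :=
  ω (polarMap c e₁ e₂ p) (p.1 • planeCircle e₂ (-e₁) p.2)

def polarPullbackRadial (p : ℝ × ℝ) : ℝ :=
  ω (polarMap c e₁ e₂ p) (planeCircle e₁ e₂ p.2)

variable {ω c e₁ e₂}

theorem DifferentiableAt.polarPullbackAngular {p : ℝ × ℝ}
    (hω : DifferentiableAt ℝ ω (polarMap c e₁ e₂ p)) :
    DifferentiableAt ℝ (polarPullbackAngular ω c e₁ e₂) p :=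
  (hω.comp p (differentiable_polarMap c e₁ e₂ p)).clm_apply (by unfold planeCircle; fun_prop)

theorem DifferentiableAt.polarPullbackRadial {p : ℝ × ℝ}
    (hω : DifferentiableAt ℝ ω (polarMap c e₁ e₂ p)) :
    DifferentiableAt ℝ (polarPullbackRadial ω c e₁ e₂) p :=
  (hω.comp p (differentiable_polarMap c e₁ e₂ p)).clm_apply (by unfold planeCircle; fun_prop)

theorem hasDerivAt_polarPullbackAngular_fst {r θ : ℝ}
    (hω : DifferentiableAt ℝ ω (polarMap c e₁ e₂ (r, θ))) :
    HasDerivAt (fun t => polarPullbackAngular ω c e₁ e₂ (t, θ))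
      (fderiv ℝ ω (polarMap c e₁ e₂ (r, θ)) (planeCircle e₁ e₂ θ) (r • planeCircle e₂ (-e₁) θ)
        + ω (polarMap c e₁ e₂ (r, θ)) (planeCircle e₂ (-e₁) θ)) r := by
  simpa [polarPullbackAngular] using (hω.hasFDerivAt.comp_hasDerivAt
    (f := fun t => polarMap c e₁ e₂ (t, θ)) r (hasDerivAt_polarMap_fst c e₁ e₂ r θ)).clm_apply
    ((hasDerivAt_id r).smul_const (planeCircle e₂ (-e₁) θ))

theorem hasDerivAt_polarPullbackRadial_snd {r θ : ℝ}
    (hω : DifferentiableAt ℝ ω (polarMap c e₁ e₂ (r, θ))) :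
    HasDerivAt (fun t => polarPullbackRadial ω c e₁ e₂ (r, t))
      (fderiv ℝ ω (polarMap c e₁ e₂ (r, θ)) (r • planeCircle e₂ (-e₁) θ) (planeCircle e₁ e₂ θ)
        + ω (polarMap c e₁ e₂ (r, θ)) (planeCircle e₂ (-e₁) θ)) θ :=
  (hω.hasFDerivAt.comp_hasDerivAt (f := fun t => polarMap c e₁ e₂ (r, t)) θ
    (hasDerivAt_polarMap_snd c e₁ e₂ r θ)).clm_apply (hasDerivAt_planeCircle e₁ e₂ θ)

theorem fderiv_polarPullbackAngular_sub_fderiv_polarPullbackRadial {p : ℝ × ℝ}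
    (hω : DifferentiableAt ℝ ω (polarMap c e₁ e₂ p)) :
    fderiv ℝ (polarPullbackAngular ω c e₁ e₂) p (1, 0)
        - fderiv ℝ (polarPullbackRadial ω c e₁ e₂) p (0, 1)
      = p.1 * (fderiv ℝ ω (polarMap c e₁ e₂ p) e₁ e₂ - fderiv ℝ ω (polarMap c e₁ e₂ p) e₂ e₁) := by
  obtain ⟨r, θ⟩ := p
  rw [fderiv_apply_one_zero_eq hω.polarPullbackAngular (hasDerivAt_polarPullbackAngular_fst hω),
    fderiv_apply_zero_one_eq hω.polarPullbackRadial (hasDerivAt_polarPullbackRadial_snd hω),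
    ← apply_planeCircle_sub_apply_planeCircle _ e₁ e₂ θ]
  simp only [map_smul, _root_.smul_apply, smul_eq_mul]
  ring

theorem integral_integral_eq_pi_mul_sq_mul {f : ℝ × ℝ → ℝ} {ρ A : ℝ} (hρ : 0 ≤ ρ)
    (hf : ∀ p : ℝ × ℝ, p.1 ∈ Icc 0 ρ → f p = p.1 * A) :
    ∫ r in 0..ρ, ∫ θ in 0..2 * π, f (r, θ) = π * ρ ^ 2 * A := by
  have hinner : EqOn (fun r => ∫ θ in 0..2 * π, f (r, θ)) (fun r => 2 * π * A * r) [[0, ρ]] :=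
    fun r hr => by
      dsimp only
      rw [intervalIntegral.integral_congr fun θ _ => hf (r, θ) (by simpa [uIcc_of_le hρ] using hr)]
      simp only [intervalIntegral.integral_const, smul_eq_mul]
      ring
  rw [intervalIntegral.integral_congr hinner, intervalIntegral.integral_const_mul, integral_id]
  ring

theorem integral_polarPullbackAngular_eq_pi_mul_sq_mul {ρ A : ℝ} (hρ : 0 ≤ ρ)
    (hω : ∀ p : ℝ × ℝ, p.1 ∈ Icc 0 ρ → DifferentiableAt ℝ ω (polarMap c e₁ e₂ p))
    (hcurl : ∀ p : ℝ × ℝ, p.1 ∈ Icc 0 ρ →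
      fderiv ℝ ω (polarMap c e₁ e₂ p) e₁ e₂ - fderiv ℝ ω (polarMap c e₁ e₂ p) e₂ e₁ = A) :
    ∫ θ in 0..2 * π, polarPullbackAngular ω c e₁ e₂ (ρ, θ) = π * ρ ^ 2 * A := by
  have hrect : ∀ p ∈ [[0, ρ]] ×ˢ [[0, 2 * π]], p.1 ∈ Icc 0 ρ := fun p hp => by
    simpa [uIcc_of_le hρ] using hp.1
  have hopen : ∀ p ∈ Ioo (min 0 ρ) (max 0 ρ) ×ˢ Ioo (min 0 (2 * π)) (max 0 (2 * π)),
      p.1 ∈ Icc 0 ρ := fun p hp => by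
    simpa [hρ] using Ioo_subset_Icc_self hp.1
  have hdiv : ∀ p : ℝ × ℝ, p.1 ∈ Icc 0 ρ →
      fderiv ℝ (polarPullbackAngular ω c e₁ e₂) p (1, 0)
        + (-fderiv ℝ (polarPullbackRadial ω c e₁ e₂) p) (0, 1) = p.1 * A := fun p hp => by
    rw [_root_.neg_apply, ← sub_eq_add_neg,
      fderiv_polarPullbackAngular_sub_fderiv_polarPullbackRadial (hω p hp), hcurl p hp]
  have hgreen := integral2_divergence_prod_of_hasFDerivAt
    (polarPullbackAngular ω c e₁ e₂) (fun p => -polarPullbackRadial ω c e₁ e₂ p)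
    (fderiv ℝ (polarPullbackAngular ω c e₁ e₂))
    (fun p => -fderiv ℝ (polarPullbackRadial ω c e₁ e₂) p) 0 0 ρ (2 * π)
    (fun p hp => (hω p (hrect p hp)).polarPullbackAngular.continuousAt.continuousWithinAt)
    (fun p hp => (hω p (hrect p hp)).polarPullbackRadial.continuousAt.neg.continuousWithinAt)
    (fun p hp => (hω p (hopen p hp)).polarPullbackAngular.hasFDerivAt)
    (fun p hp => (hω p (hopen p hp)).polarPullbackRadial.hasFDerivAt.neg)
    (((continuous_fst.mul continuous_const).continuousOn.integrableOn_compact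
      (isCompact_uIcc.prod isCompact_uIcc)).congr_fun (fun p hp => (hdiv p (hrect p hp)).symm)
      (measurableSet_uIcc.prod measurableSet_uIcc))
  have hperiodic : ∀ r, polarPullbackRadial ω c e₁ e₂ (r, 2 * π)
      = polarPullbackRadial ω c e₁ e₂ (r, 0) := fun r => by
    simp [polarPullbackRadial, polarMap, planeCircle]
  have hcentre : ∀ θ, polarPullbackAngular ω c e₁ e₂ (0, θ) = 0 := fun θ => by
    simp [polarPullbackAngular]
  simp only [hperiodic, hcentre, sub_self, intervalIntegral.integral_zero, zero_add, sub_zero,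
    integral_integral_eq_pi_mul_sq_mul hρ hdiv] at hgreen
  exact hgreen.symm

theorem pi_mul_sq_mul_le_two_pi_mul_mul {ρ A M : ℝ} (hρ : 0 ≤ ρ)
    (hω : ∀ p : ℝ × ℝ, p.1 ∈ Icc 0 ρ → DifferentiableAt ℝ ω (polarMap c e₁ e₂ p))
    (hcurl : ∀ p : ℝ × ℝ, p.1 ∈ Icc 0 ρ →
      fderiv ℝ ω (polarMap c e₁ e₂ p) e₁ e₂ - fderiv ℝ ω (polarMap c e₁ e₂ p) e₂ e₁ = A)
    (hbound : ∀ θ, ω (polarMap c e₁ e₂ (ρ, θ)) (planeCircle e₂ (-e₁) θ) ≤ M) :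
    π * ρ ^ 2 * A ≤ 2 * π * ρ * M := by
  rw [← integral_polarPullbackAngular_eq_pi_mul_sq_mul hρ hω hcurl]
  have hcont : Continuous fun θ => polarPullbackAngular ω c e₁ e₂ (ρ, θ) :=
    continuous_iff_continuousAt.2 fun θ =>
      (hω (ρ, θ) ⟨hρ, le_rfl⟩).polarPullbackAngular.continuousAt.comp (by fun_prop)
  calc ∫ θ in 0..2 * π, polarPullbackAngular ω c e₁ e₂ (ρ, θ)
      ≤ ∫ _ in 0..2 * π, ρ * M :=
        intervalIntegral.integral_mono_on (by positivity) (hcont.intervalIntegrable _ _)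
          intervalIntegrable_const fun θ _ => by
            simpa [polarPullbackAngular] using mul_le_mul_of_nonneg_left (hbound θ) hρ
    _ = 2 * π * ρ * M := by
      rw [intervalIntegral.integral_const, smul_eq_mul, sub_zero]
      ring

end PolarStokes

section Coordinates

variable {ι : Type*} [Fintype ι]

theorem dotProduct_le_one {w x : ι → ℝ} (hw : w ⬝ᵥ w ≤ 1) (hx : x ⬝ᵥ x = 1) : w ⬝ᵥ x ≤ 1 := by
  have hsq : ∀ y : ι → ℝ, ∑ i, y i ^ 2 = y ⬝ᵥ y := fun y => by simp [dotProduct, sq]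
  calc w ⬝ᵥ x ≤ √(∑ i, w i ^ 2) * √(∑ i, x i ^ 2) := Real.sum_mul_le_sqrt_mul_sqrt _ w x
    _ ≤ 1 := by rw [hsq, hsq, hx, sqrt_one, mul_one]; exact sqrt_le_one.2 hw

theorem vecMul_dotProduct_le_one [DecidableEq ι] {A : Matrix ι ι ℝ} (hA : Aᵀ * A = 1)
    {w u : ι → ℝ} (hw : w ⬝ᵥ w ≤ 1) (hu : u ⬝ᵥ u = 1) : (w ᵥ* A) ⬝ᵥ u ≤ 1 := by
  refine (dotProduct_mulVec w A u).symm.trans_le (dotProduct_le_one hw ?_)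
  rw [dotProduct_mulVec, ← mulVec_transpose, mulVec_mulVec, hA, one_mulVec, dotProduct_comm, hu]

theorem exists_dotProduct_self_le_one_and_dotProduct_eq_sqrt (a : ι → ℝ) :
    ∃ w : ι → ℝ, w ⬝ᵥ w ≤ 1 ∧ w ⬝ᵥ a = √(a ⬝ᵥ a) := by
  have ha : 0 ≤ a ⬝ᵥ a := dotProduct_self_star_nonneg a
  -- for `a = 0` this is `w = 0`, since `(√0)⁻¹ = 0`
  refine ⟨(√(a ⬝ᵥ a))⁻¹ • a, ?_, ?_⟩
  · rw [smul_dotProduct, dotProduct_smul, smul_eq_mul, smul_eq_mul, ← mul_assoc, ← mul_inv,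
      mul_self_sqrt ha]
    exact inv_mul_le_one_of_le₀ le_rfl ha
  · rw [smul_dotProduct, smul_eq_mul, ← div_eq_inv_mul, div_sqrt]

theorem planeCircle_dotProduct_self {e₁ e₂ : ι → ℝ} (h₁ : e₁ ⬝ᵥ e₁ = 1) (h₂ : e₂ ⬝ᵥ e₂ = 1)
    (h₁₂ : e₁ ⬝ᵥ e₂ = 0) (θ : ℝ) : planeCircle e₁ e₂ θ ⬝ᵥ planeCircle e₁ e₂ θ = 1 := by
  simp only [planeCircle, add_dotProduct, dotProduct_add, smul_dotProduct, dotProduct_smul,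
    smul_eq_mul, h₁, h₂, h₁₂, dotProduct_comm e₂ e₁]
  linear_combination sin_sq_add_cos_sq θ

theorem planeCircle_dotProduct_eq_zero {e₁ e₂ v : ι → ℝ} (h₁ : e₁ ⬝ᵥ v = 0) (h₂ : e₂ ⬝ᵥ v = 0)
    (θ : ℝ) : planeCircle e₁ e₂ θ ⬝ᵥ v = 0 := by
  simp [planeCircle, add_dotProduct, h₁, h₂]

theorem polarMap_mem_disk {c e₁ e₂ v : ι → ℝ} (h₁ : e₁ ⬝ᵥ e₁ = 1) (h₂ : e₂ ⬝ᵥ e₂ = 1)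
    (h₁₂ : e₁ ⬝ᵥ e₂ = 0) (h₁v : e₁ ⬝ᵥ v = 0) (h₂v : e₂ ⬝ᵥ v = 0) {ρ : ℝ} {p : ℝ × ℝ}
    (hp : p.1 ∈ Icc 0 ρ) :
    polarMap c e₁ e₂ p ∈ {x | ∑ i, (x i - c i) ^ 2 ≤ ρ ^ 2 ∧ ∑ i, (x i - c i) * v i = 0} := by
  set x := polarMap c e₁ e₂ p
  have hsub : x - c = p.1 • planeCircle e₁ e₂ p.2 := add_sub_cancel_left _ _
  constructor
  · calc ∑ i, (x i - c i) ^ 2 = (x - c) ⬝ᵥ (x - c) := by simp [dotProduct, sq]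
      _ = p.1 ^ 2 := by
        rw [hsub, smul_dotProduct, dotProduct_smul, planeCircle_dotProduct_self h₁ h₂ h₁₂]
        simp [sq]
      _ ≤ ρ ^ 2 := pow_le_pow_left₀ hp.1 hp.2 2
  · calc ∑ i, (x i - c i) * v i = (x - c) ⬝ᵥ v := rfl
      _ = 0 := by rw [hsub, smul_dotProduct, planeCircle_dotProduct_eq_zero h₁v h₂v, smul_zero]

def flat (φ : (ι → ℝ) → ι → ℝ) (x : ι → ℝ) : (ι → ℝ) →L[ℝ] ℝ :=
  ∑ k, φ x k • ContinuousLinearMap.proj k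

@[simp]
theorem flat_apply (φ : (ι → ℝ) → ι → ℝ) (x u : ι → ℝ) : flat φ x u = φ x ⬝ᵥ u := by
  simp [flat, dotProduct]

variable {φ : (ι → ℝ) → ι → ℝ} {x : ι → ℝ}

theorem hasFDerivAt_flat (hφ : ∀ k, DifferentiableAt ℝ (fun y => φ y k) x) :
    HasFDerivAt (flat φ)
      (∑ k, (fderiv ℝ (fun y => φ y k) x).smulRight (ContinuousLinearMap.proj k)) x :=
  HasFDerivAt.fun_sum fun k _ =>
    (hφ k).hasFDerivAt.smul_const (ContinuousLinearMap.proj (R := ℝ) (φ := fun _ : ι => ℝ) k)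

theorem fderiv_flat_apply_apply (hφ : ∀ k, DifferentiableAt ℝ (fun y => φ y k) x) (u w : ι → ℝ) :
    fderiv ℝ (flat φ) x u w = ∑ k, fderiv ℝ (fun y => φ y k) x u * w k := by
  simp [(hasFDerivAt_flat hφ).fderiv]

end Coordinates

noncomputable section Curl

theorem fderiv_apply_eq_sum_mul_pd {n : ℕ} (f : (Fin n → ℝ) → ℝ) (x u : Fin n → ℝ) :
    fderiv ℝ f x u = ∑ j, u j * pd j f x := by
  conv_lhs => rw [pi_eq_sum_univ' u]
  simp [pd]

theorem pd_sum_const_mul {n : ℕ} {f : Fin n → (Fin n → ℝ) → ℝ} {x : Fin n → ℝ}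
    (hf : ∀ i, DifferentiableAt ℝ (f i) x) (w : Fin n → ℝ) (j : Fin n) :
    pd j (fun y => ∑ i, w i * f i y) x = ∑ i, w i * pd j (f i) x := by
  simp [pd, fderiv_fun_sum fun i _ => (hf i).const_mul (w i), fderiv_const_mul (hf _)]

def curl (φ : (Fin 3 → ℝ) → Fin 3 → ℝ) (x : Fin 3 → ℝ) : Fin 3 → ℝ :=
  fun l => ∑ j, ∑ k, eps l j k * pd j (fun y => φ y k) x

theorem fderiv_flat_sub_fderiv_flat {φ : (Fin 3 → ℝ) → Fin 3 → ℝ} {x : Fin 3 → ℝ}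
    (hφ : ∀ k, DifferentiableAt ℝ (fun y => φ y k) x) (u w : Fin 3 → ℝ) :
    fderiv ℝ (flat φ) x u w - fderiv ℝ (flat φ) x w u = curl φ x ⬝ᵥ (u ⨯₃ w) := by
  simp only [fderiv_flat_apply_apply hφ, fderiv_apply_eq_sum_mul_pd, curl, dotProduct]
  -- coordinatewise: `u j * w k - w j * u k = ∑ l, eps l j k * (u ⨯₃ w) l`
  simp only [Fin.sum_univ_three, Fin.isValue, eps, Prod.mk.injEq, ite_mul, one_mul, neg_mul,
    zero_mul, Fin.reduceEq, and_false, and_true, zero_ne_one, or_false, false_or, or_self,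
    one_ne_zero, ↓reduceIte, zero_add, add_zero, cross_apply, Nat.succ_eq_add_one, Nat.reduceAdd,
    cons_val_zero, cons_val_one, cons_val]
  ring

variable {M : (Fin 3 → ℝ) → Matrix (Fin 3) (Fin 3) ℝ} {x : Fin 3 → ℝ}

theorem differentiableAt_vecMul_apply (hM : ∀ i k, DifferentiableAt ℝ (fun y => M y i k) x)
    (w : Fin 3 → ℝ) (k : Fin 3) : DifferentiableAt ℝ (fun y => (w ᵥ* M y) k) x := by
  simp only [vecMul, dotProduct]
  fun_prop

theorem curl_vecMul (hM : ∀ i k, DifferentiableAt ℝ (fun y => M y i k) x) (w : Fin 3 → ℝ) :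
    curl (fun y => w ᵥ* M y) x = w ᵥ* Matrix.of fun i => curl (fun y => M y i) x := by
  ext l
  simp only [curl, vecMul, dotProduct, pd_sum_const_mul fun i => hM i _, of_apply, Finset.mul_sum]
  simp only [Fin.sum_univ_three]
  ring

end Curl

theorem exists_unit_orthogonal (v : Fin 3 → ℝ) : ∃ u : Fin 3 → ℝ, u ⬝ᵥ u = 1 ∧ u ⬝ᵥ v = 0 := by
  by_cases h : v 0 = 0 ∧ v 1 = 0
  · exact ⟨![1, 0, 0], by simp [dotProduct, Fin.sum_univ_three],
      by simp [dotProduct, Fin.sum_univ_three, h.1]⟩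
  have hpos : 0 < v 0 ^ 2 + v 1 ^ 2 := by
    rcases not_and_or.1 h with h | h <;> positivity
  refine ⟨(√(v 0 ^ 2 + v 1 ^ 2))⁻¹ • ![-v 1, v 0, 0], ?_, ?_⟩
  · simp only [dotProduct, Fin.isValue, Pi.smul_apply, smul_eq_mul, Fin.sum_univ_three,
      cons_val_zero, mul_neg, neg_mul, neg_neg, cons_val_one, cons_val, mul_zero, add_zero]
    have hsqrt : √(v 0 ^ 2 + v 1 ^ 2) ^ 2 = v 0 ^ 2 + v 1 ^ 2 := sq_sqrt hpos.le
    have hne : √(v 0 ^ 2 + v 1 ^ 2) ≠ 0 := (sqrt_pos.2 hpos).ne'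
    field_simp
    linear_combination -hsqrt
  · simp only [dotProduct, Fin.isValue, Pi.smul_apply, smul_eq_mul, Fin.sum_univ_three,
      cons_val_zero, mul_neg, neg_mul, cons_val_one, cons_val, mul_zero, zero_mul, add_zero]
    ring

theorem exists_orthonormal_cross_eq {v : Fin 3 → ℝ} (hv : v ⬝ᵥ v = 1) :
    ∃ e₁ e₂ : Fin 3 → ℝ, e₁ ⬝ᵥ e₁ = 1 ∧ e₂ ⬝ᵥ e₂ = 1 ∧ e₁ ⬝ᵥ e₂ = 0 ∧
      e₁ ⬝ᵥ v = 0 ∧ e₂ ⬝ᵥ v = 0 ∧ e₁ ⨯₃ e₂ = v := by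
  obtain ⟨e, he, hev⟩ := exists_unit_orthogonal v
  refine ⟨e, v ⨯₃ e, he, ?_, dot_cross_self v e, hev, ?_, ?_⟩
  · rw [cross_dot_cross, hv, he, dotProduct_comm v e, hev]
    ring
  · rw [dotProduct_comm, dot_self_cross]
  · rw [cross_cross_eq_smul_sub_smul', he, dotProduct_comm v e, hev]
    simp

theorem disk_estimate_for_constant_curl_rotation_field
    (Ω : Set (Fin 3 → ℝ)) (hΩ : IsOpen Ω)
    (R : (Fin 3 → ℝ) → Fin 3 → Fin 3 → ℝ) (hR : ContDiffOn ℝ 1 R Ω)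
    (hSO : ∀ x ∈ Ω, (Matrix.of (R x))ᵀ * Matrix.of (R x) = 1 ∧ (Matrix.of (R x)).det = 1)
    (α : Matrix (Fin 3) (Fin 3) ℝ)
    (hcurl : ∀ x ∈ Ω, ∀ i l : Fin 3,
      ∑ j, ∑ k, eps l j k * pd j (fun y => R y i k) x = α i l)
    (v : Fin 3 → ℝ) (hv : ∑ i, (v i) ^ 2 = 1)
    (c : Fin 3 → ℝ) (ρ : ℝ) (hρ : 0 < ρ)
    (hD : {x : Fin 3 → ℝ | ∑ i, (x i - c i) ^ 2 ≤ ρ ^ 2 ∧ ∑ i, (x i - c i) * v i = 0} ⊆ Ω) :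
    Real.pi * ρ ^ 2 * Real.sqrt (∑ i, (∑ j, α i j * v j) ^ 2) ≤ 2 * Real.pi * ρ := by
  obtain ⟨w, hw, hwa⟩ := exists_dotProduct_self_le_one_and_dotProduct_eq_sqrt (α *ᵥ v)
  obtain ⟨e₁, e₂, h₁, h₂, h₁₂, h₁v, h₂v, hcross⟩ :=
    exists_orthonormal_cross_eq (v := v) (by simpa [dotProduct, sq] using hv)
  have hdisk : ∀ p : ℝ × ℝ, p.1 ∈ Icc 0 ρ → polarMap c e₁ e₂ p ∈ Ω := fun p hp =>
    hD (polarMap_mem_disk h₁ h₂ h₁₂ h₁v h₂v hp)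
  have hRdiff : ∀ x ∈ Ω, ∀ i k, DifferentiableAt ℝ (fun y => of (R y) i k) x := fun x hx i k =>
    differentiableAt_pi.1 (differentiableAt_pi.1
      ((hR.differentiableOn one_ne_zero).differentiableAt (hΩ.mem_nhds hx)) i) k
  have hφ : ∀ x ∈ Ω, ∀ k, DifferentiableAt ℝ (fun y => (w ᵥ* of (R y)) k) x := fun x hx =>
    differentiableAt_vecMul_apply (hRdiff x hx) w
  have hcurlR : ∀ x ∈ Ω, (of fun i => curl (fun y => of (R y) i) x) = α := fun x hx => by
    ext i l
    exact hcurl x hx i l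
  have hsum : ∑ i, (∑ j, α i j * v j) ^ 2 = (α *ᵥ v) ⬝ᵥ (α *ᵥ v) := by
    simp [dotProduct, mulVec, sq]
  rw [hsum, ← mul_one (2 * π * ρ)]
  refine pi_mul_sq_mul_le_two_pi_mul_mul (ω := flat fun y => w ᵥ* of (R y)) hρ.le
    (fun p hp => (hasFDerivAt_flat (hφ _ (hdisk p hp))).differentiableAt)
    (fun p hp => by
      rw [fderiv_flat_sub_fderiv_flat (hφ _ (hdisk p hp)), curl_vecMul (hRdiff _ (hdisk p hp)),
        hcurlR _ (hdisk p hp), hcross, ← dotProduct_mulVec, hwa])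
    (fun θ => by
      rw [flat_apply]
      exact vecMul_dotProduct_le_one (hSO _ (hdisk _ ⟨hρ.le, le_rfl⟩)).1 hw
        (planeCircle_dotProduct_self h₂ (by simpa using h₁) (by simp [dotProduct_comm, h₁₂]) θ))
end

section
/- Let Ω ⊆ ℝⁿ, and let R : Ω → SO(n) be differentiable at x ∈ Ω. Then for all i,k,l: 2(R(x)ᵀ ∂ᵢR(x))ₖₗ = Σₘ [ Rₘₖ(x)(Curl R(x))ₘᵢₗ + Rₘᵢ(x)(Curl R(x))ₘₖₗ + Rₘₗ(x)(Curl R(x))ₘₖᵢ ], where (Curl R)ₘⱼₖ = ∂ⱼRₘₖ - ∂ₖRₘⱼ. -/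
open Matrix

/-! Differentiating `RᵀR = 1` shows that each `A j := Rᵀ ∂ⱼR` is skew-symmetric. Every curl term on
the right is an antisymmetrization `(A j) a b - (A b) a j`, and three applications of the skew-symmetry
turn their sum into `2 (A i) k l`. -/

open Filter Topology

theorem two_smul_eq_of_skew {ι G : Type*} [AddCommGroup G] {A : ι → ι → ι → G}
    (hA : ∀ j a b, A j a b = -A j b a) (i k l : ι) :
    2 • A i k l = (A i k l - A l k i) + (A k i l - A l i k) + (A k l i - A i l k) := by
  rw [hA l k i, hA k i l, hA i l k, two_nsmul]
  abel

theorem sum_mul_fderiv_add_sum_mul_fderiv_eq_zero {E : Type*} [NormedAddCommGroup E]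
    [NormedSpace ℝ E] {n : ℕ} {Q : E → Fin n → Fin n → ℝ} {x : E}
    (horth : ∀ᶠ y in 𝓝 x, (Matrix.of (Q y))ᵀ * Matrix.of (Q y) = 1)
    (hdiff : DifferentiableAt ℝ Q x) (v : E) (a b : Fin n) :
    ∑ m, Q x m a * fderiv ℝ (fun y => Q y m b) x v
      + ∑ m, Q x m b * fderiv ℝ (fun y => Q y m a) x v = 0 := by
  have hentry : ∀ m c, DifferentiableAt ℝ (fun y => Q y m c) x := fun m c =>
    differentiableAt_pi.mp (differentiableAt_pi.mp hdiff m) c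
  have hgram : HasFDerivAt (fun y => ∑ m, Q y m a * Q y m b)
      (∑ m, (Q x m a • fderiv ℝ (fun y => Q y m b) x
        + Q x m b • fderiv ℝ (fun y => Q y m a) x)) x :=
    HasFDerivAt.fun_sum fun m _ => (hentry m a).hasFDerivAt.mul (hentry m b).hasFDerivAt
  have hconst : HasFDerivAt (fun y => ∑ m, Q y m a * Q y m b) (0 : E →L[ℝ] ℝ) x := by
    refine (hasFDerivAt_const ((1 : Matrix (Fin n) (Fin n) ℝ) a b) x).congr_of_eventuallyEq ?_
    filter_upwards [horth] with y hy
    simpa [Matrix.mul_apply] using congrFun (congrFun hy a) b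
  simpa [Finset.sum_add_distrib] using congrArg (· v) (hgram.unique hconst)

theorem derivative_of_rotation_field_from_curl
    (n : ℕ) (Ω : Set (Fin n → ℝ)) (hΩ : IsOpen Ω)
    (R : (Fin n → ℝ) → Fin n → Fin n → ℝ)
    (hSO : ∀ y ∈ Ω, (Matrix.of (R y))ᵀ * Matrix.of (R y) = 1 ∧ (Matrix.of (R y)).det = 1)
    (x : Fin n → ℝ) (hx : x ∈ Ω) (hdiff : DifferentiableAt ℝ R x) :
    ∀ i k l : Fin n,
      2 * ∑ m, R x m k * pd i (fun y => R y m l) x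
        = ∑ m, (R x m k * (pd i (fun y => R y m l) x - pd l (fun y => R y m i) x)
              + R x m i * (pd k (fun y => R y m l) x - pd l (fun y => R y m k) x)
              + R x m l * (pd k (fun y => R y m i) x - pd i (fun y => R y m k) x)) := by
  intro i k l
  have horth : ∀ᶠ y in 𝓝 x, (Matrix.of (R y))ᵀ * Matrix.of (R y) = 1 :=
    eventually_of_mem (hΩ.mem_nhds hx) fun y hy => (hSO y hy).1
  have hskew : ∀ j a b : Fin n, ∑ m, R x m a * pd j (fun y => R y m b) x
      = -∑ m, R x m b * pd j (fun y => R y m a) x := fun j a b =>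
    eq_neg_of_add_eq_zero_left
      (sum_mul_fderiv_add_sum_mul_fderiv_eq_zero horth hdiff (Pi.single j 1) a b)
  have hsym := two_smul_eq_of_skew hskew i k l
  simp only [mul_sub, Finset.sum_add_distrib, Finset.sum_sub_distrib, nsmul_eq_mul] at hsym ⊢
  exact_mod_cast hsym
end
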